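/- arXiv:1801.09815 — 3 statements merged into one kernel-verified Lean document; each statement's English description precedes it below -/
import Mathlib

section
/- Let V(ξ) be a smooth vector field on ℝⁿ, f a smooth function with 0 a regular value, F = {ξ : f(ξ) = 0}, and r > 0. If the field W(ξ) = f(ξ)^{-r} V(ξ) is divergence-free at all points where f(ξ) ≠ 0, then V is tangent to the hypersurface F at every point of F (i.e., F is an invariant hypersurface of V). -/
open Real Filter Topology

/-- Divergence of a vector field on ℝⁿ. -/
noncomputable def diver {n : ℕ} (W : (Fin n → ℝ) → (Fin n → ℝ)) (ξ : Fin n → ℝ) : ℝ :=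
  ∑ i, fderiv ℝ W ξ (Pi.single i 1) i

lemma sum_clm_single {n : ℕ} (L : (Fin n → ℝ) →L[ℝ] ℝ) (w : Fin n → ℝ) :
    ∑ i, L (Pi.single i 1) * w i = L w := by
  have hw : w = ∑ i, w i • (Pi.single i (1:ℝ) : Fin n → ℝ) := by
    ext j
    simp [Pi.single_apply, eq_comm]
  conv_rhs => rw [hw]
  rw [map_sum]
  simp [mul_comm]

lemma diver_smul_key {n : ℕ} (V : (Fin n → ℝ) → (Fin n → ℝ)) (f : (Fin n → ℝ) → ℝ) (r : ℝ)
    (hV : ContDiff ℝ (⊤ : ℕ∞) V) (hf : ContDiff ℝ (⊤ : ℕ∞) f) (η : Fin n → ℝ) (ha : f η ≠ 0) :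
    diver (fun η => (|f η| ^ (-r)) • V η) η =
      |f η| ^ (-r) * diver V η +
        (-r * |f η| ^ (-r - 1) * (SignType.sign (f η) : ℝ)) * fderiv ℝ f η (V η) := by
  set a := f η with hadef
  have hdf : HasFDerivAt f (fderiv ℝ f η) η :=
    (hf.differentiable (by simp) η).hasFDerivAt
  have hdV : HasFDerivAt V (fderiv ℝ V η) η :=
    (hV.differentiable (by simp) η).hasFDerivAt
  have habs : HasDerivAt (fun t : ℝ => |t| ^ (-r))
      ((-r * |a| ^ (-r - 1)) * (SignType.sign a : ℝ)) a := by
    have h1 : HasDerivAt (fun x : ℝ => x ^ (-r)) (-r * |a| ^ (-r - 1)) |a| :=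
      Real.hasDerivAt_rpow_const (Or.inl (abs_ne_zero.2 ha))
    exact h1.comp a (hasDerivAt_abs ha)
  have hc : HasFDerivAt (fun η => |f η| ^ (-r))
      (((-r * |a| ^ (-r - 1)) * (SignType.sign a : ℝ)) • fderiv ℝ f η) η :=
    habs.comp_hasFDerivAt η hdf
  have hW : HasFDerivAt (fun η => (|f η| ^ (-r)) • V η)
      (|a| ^ (-r) • fderiv ℝ V η +
        ((((-r * |a| ^ (-r - 1)) * (SignType.sign a : ℝ)) • fderiv ℝ f η).smulRight (V η))) η :=
    hc.smul hdV
  rw [diver, hW.fderiv]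
  have haux : ∀ i, (|a| ^ (-r) • fderiv ℝ V η +
        ((((-r * |a| ^ (-r - 1)) * (SignType.sign a : ℝ)) • fderiv ℝ f η).smulRight (V η)))
      (Pi.single i 1) i
      = |a| ^ (-r) * fderiv ℝ V η (Pi.single i 1) i +
        ((-r * |a| ^ (-r - 1)) * (SignType.sign a : ℝ)) * fderiv ℝ f η (Pi.single i 1) * V η i := by
    intro i
    simp [mul_assoc]
  rw [Finset.sum_congr rfl (fun i _ => haux i), Finset.sum_add_distrib, ← Finset.mul_sum]
  have h2 : ∑ x : Fin n, -r * |a| ^ (-r - 1) * (SignType.sign a : ℝ) *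
        (fderiv ℝ f η) (Pi.single x 1) * V η x
      = -r * |a| ^ (-r - 1) * (SignType.sign a : ℝ) * fderiv ℝ f η (V η) := by
    rw [← sum_clm_single (fderiv ℝ f η) (V η), Finset.mul_sum]
    exact Finset.sum_congr rfl fun i _ => by ring
  rw [h2]
  rfl

/-- If W = |f|^{-r} V is divergence-free wherever f ≠ 0 (f having 0 as a regular value),
then the hypersurface F = {f = 0} is invariant for V: V is tangent to F at every point of F. -/
theorem stmt2 {n : ℕ} (V : (Fin n → ℝ) → (Fin n → ℝ)) (f : (Fin n → ℝ) → ℝ) (r : ℝ)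
    (hr : 0 < r)
    (hV : ContDiff ℝ (⊤ : ℕ∞) V) (hf : ContDiff ℝ (⊤ : ℕ∞) f)
    (hreg : ∀ ξ, f ξ = 0 → fderiv ℝ f ξ ≠ 0)
    (hdiv : ∀ ξ, f ξ ≠ 0 → diver (fun η => (|f η| ^ (-r)) • V η) ξ = 0) :
    ∀ ξ, f ξ = 0 → fderiv ℝ f ξ (V ξ) = 0 := by
  set g : (Fin n → ℝ) → ℝ :=
    fun η => fderiv ℝ f η (V η) - f η / r * diver V η with hgdef
  -- g is continuous
  have hfderivf : Continuous (fun η => fderiv ℝ f η) := hf.continuous_fderiv (by simp)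
  have hfderivV : Continuous (fun η => fderiv ℝ V η) := hV.continuous_fderiv (by simp)
  have hdiverV : Continuous (fun η => diver V η) := by
    apply continuous_finset_sum
    intro i _
    exact (continuous_apply i).comp (hfderivV.clm_apply continuous_const)
  have hgc : Continuous g :=
    (hfderivf.clm_apply hV.continuous).sub
      ((hf.continuous.div_const r).mul hdiverV)
  -- g vanishes where f ≠ 0
  have hgs : ∀ η, f η ≠ 0 → g η = 0 := by
    intro η ha
    have heq := hdiv η ha
    rw [diver_smul_key V f r hV hf η ha] at heq
    set a := f η
    set D := diver V η
    set P := fderiv ℝ f η (V η)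
    have habs : |a| ≠ 0 := abs_ne_zero.2 ha
    have hb0 : (0:ℝ) < |a| ^ (-r) := Real.rpow_pos_of_pos (abs_pos.2 ha) _
    have hs : (SignType.sign a : ℝ) = a / |a| := by
      rw [eq_div_iff habs]; exact sign_mul_abs a
    have hpow : |a| ^ (-r - 1) = |a| ^ (-r) / |a| := Real.rpow_sub_one habs (-r)
    rw [hpow, hs] at heq
    have hsq : |a| * |a| = a * a := by nlinarith [sq_abs a]
    field_simp at heq
    have h2 : (|a| ^ (-r) * a) * (a * D - r * P) = 0 := by linear_combination heq - |a| ^ (-r) * D * hsq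
    have h3 : a * D - r * P = 0 := by
      rcases mul_eq_zero.1 h2 with h | h
      · exact absurd h (mul_ne_zero hb0.ne' ha)
      · exact h
    show P - a / r * D = 0
    field_simp
    linarith
  intro ξ hξ
  -- ξ is in the closure of {f ≠ 0}
  obtain ⟨v, hv⟩ : ∃ v, fderiv ℝ f ξ v ≠ 0 := by
    by_contra h
    push_neg at h
    exact hreg ξ hξ (ContinuousLinearMap.ext fun v => h v)
  have hline : HasDerivAt (fun t : ℝ => ξ + t • v) v 0 := by
    simpa using ((hasDerivAt_id (0:ℝ)).smul_const v).const_add ξ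
  have hφ : HasDerivAt (fun t : ℝ => f (ξ + t • v)) (fderiv ℝ f ξ v) 0 := by
    have hdf : HasFDerivAt f (fderiv ℝ f ξ) ξ := (hf.differentiable (by simp) ξ).hasFDerivAt
    have hdf' : HasFDerivAt f (fderiv ℝ f ξ) (ξ + (0:ℝ) • v) := by simpa using hdf
    exact hdf'.comp_hasDerivAt (x := (0:ℝ)) hline
  have hslope : Tendsto (slope (fun t : ℝ => f (ξ + t • v)) 0) (𝓝[≠] (0:ℝ))
      (𝓝 (fderiv ℝ f ξ v)) := hasDerivAt_iff_tendsto_slope.1 hφ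
  have hev : ∀ᶠ t in 𝓝[≠] (0:ℝ), f (ξ + t • v) ≠ 0 := by
    filter_upwards [hslope.eventually_ne hv, self_mem_nhdsWithin] with t h1 h2
    intro hc
    apply h1
    simp [slope_def_field, hc, hξ]
  have htend : Tendsto (fun t : ℝ => ξ + t • v) (𝓝[≠] (0:ℝ)) (𝓝 ξ) := by
    have : Tendsto (fun t : ℝ => ξ + t • v) (𝓝 (0:ℝ)) (𝓝 (ξ + (0:ℝ) • v)) :=
      (continuous_const.add (continuous_id.smul continuous_const)).tendsto 0
    simpa using this.mono_left nhdsWithin_le_nhds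
  have hcl : ξ ∈ closure {η | f η ≠ 0} :=
    mem_closure_of_frequently_of_tendsto (hev.frequently) htend
  have hnb : (𝓝[{η | f η ≠ 0}] ξ).NeBot := mem_closure_iff_nhdsWithin_neBot.1 hcl
  have h1 : Tendsto g (𝓝[{η | f η ≠ 0}] ξ) (𝓝 (g ξ)) :=
    (hgc.tendsto ξ).mono_left nhdsWithin_le_nhds
  have h2 : Tendsto g (𝓝[{η | f η ≠ 0}] ξ) (𝓝 0) := by
    apply Tendsto.congr' _ tendsto_const_nhds
    filter_upwards [self_mem_nhdsWithin] with η hη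
    exact (hgs η hη).symm
  have hg0 : g ξ = 0 := tendsto_nhds_unique h1 h2
  have : fderiv ℝ f ξ (V ξ) - f ξ / r * diver V ξ = 0 := hg0
  rw [hξ] at this
  simpa using this
end

section
/- Let V be a smooth vector field on ℝⁿ, f smooth with regular zero set F, r > 0, and suppose W = f^{-r}V is divergence-free off F. If ξ* ∈ F is a singular point of V and λ₁,...,λₙ are the eigenvalues of the linearization DV(ξ*), then λ₁ + ⋯ + λₙ = r·λⱼ for at least one index j. -/
open Polynomial

/-- The Jacobian matrix of V at ξ. -/
noncomputable def jacobian {n : ℕ} (V : (Fin n → ℝ) → (Fin n → ℝ)) (ξ : Fin n → ℝ) :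
    Matrix (Fin n) (Fin n) ℝ :=
  fun i j => fderiv ℝ (fun η => V η i) ξ (Pi.single j 1)

lemma abs_rpow_eq (r : ℝ) (x : ℝ) (hr : 0 < r) : |x| ^ (-r) = (x ^ 2) ^ (-r/2) := by
  rcases eq_or_ne x 0 with h | h
  · rw [h]
    simp only [abs_zero, ne_eq]
    rw [Real.zero_rpow (by linarith), zero_pow (by norm_num), Real.zero_rpow (by linarith)]
  · rw [← sq_abs, ← Real.rpow_natCast |x| 2, ← Real.rpow_mul (abs_nonneg x)]
    congr 1
    ring

lemma offF {n : ℕ} (V : (Fin n → ℝ) → (Fin n → ℝ)) (f : (Fin n → ℝ) → ℝ) (r : ℝ)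
    (hr : 0 < r) (hV : ContDiff ℝ (⊤ : ℕ∞) V) (hf : ContDiff ℝ (⊤ : ℕ∞) f)
    (hdiv : ∀ ξ, f ξ ≠ 0 → diver (fun η => (|f η| ^ (-r)) • V η) ξ = 0)
    (ξ : Fin n → ℝ) (hfx : f ξ ≠ 0) :
    f ξ * diver V ξ - r * ∑ i, fderiv ℝ f ξ (Pi.single i 1) * V ξ i = 0 := by
  set φ : (Fin n → ℝ) → ℝ := fun η => (f η ^ 2) ^ (-r/2) with hφdef
  have hfun : (fun η => (|f η| ^ (-r)) • V η) = fun η => φ η • V η := by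
    funext η
    rw [hφdef, abs_rpow_eq r (f η) hr]
  have hfd : HasFDerivAt f (fderiv ℝ f ξ) ξ := (hf.differentiable (by simp) ξ).hasFDerivAt
  have hVd : HasFDerivAt V (fderiv ℝ V ξ) ξ := (hV.differentiable (by simp) ξ).hasFDerivAt
  have hsqpos : (0:ℝ) < f ξ ^ 2 := by positivity
  have hsq : HasFDerivAt (fun η => f η ^ 2) ((2 * f ξ) • fderiv ℝ f ξ) ξ := by
    have h := hfd.fun_mul hfd
    have heq : (fun η => f η * f η) = fun η => f η ^ 2 := by funext η; ring
    rw [heq] at h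
    rw [two_mul, add_smul]
    exact h
  have hrpow : HasDerivAt (fun y : ℝ => y ^ (-r/2)) ((-r/2) * (f ξ ^ 2) ^ (-r/2 - 1)) (f ξ ^ 2) :=
    Real.hasDerivAt_rpow_const (Or.inl hsqpos.ne')
  set c : ℝ := -r * φ ξ / f ξ with hc
  have hφpos : 0 < φ ξ := Real.rpow_pos_of_pos hsqpos _
  have hscal : ((-r/2) * (f ξ ^ 2) ^ (-r/2 - 1)) * (2 * f ξ) = c := by
    rw [hc, hφdef]
    have h1 : (f ξ ^ 2 : ℝ) ^ (-r/2 - 1) = (f ξ ^ 2) ^ (-r/2) / (f ξ ^ 2) := by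
      rw [Real.rpow_sub hsqpos, Real.rpow_one]
    rw [h1]
    field_simp
  have hφ : HasFDerivAt φ (c • fderiv ℝ f ξ) ξ := by
    have h := hrpow.comp_hasFDerivAt ξ hsq
    rw [smul_smul, hscal] at h
    exact h
  have hW : HasFDerivAt (fun η => φ η • V η)
      (φ ξ • fderiv ℝ V ξ + (c • fderiv ℝ f ξ).smulRight (V ξ)) ξ := hφ.smul hVd
  have h0 := hdiv ξ hfx
  rw [hfun] at h0
  unfold diver at h0
  rw [hW.fderiv] at h0
  simp only [ContinuousLinearMap.add_apply, ContinuousLinearMap.coe_smul', Pi.smul_apply,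
    ContinuousLinearMap.smulRight_apply, Pi.add_apply, smul_eq_mul] at h0
  rw [Finset.sum_add_distrib] at h0
  have h1 : ∑ i, φ ξ * (fderiv ℝ V ξ) (Pi.single i 1) i = φ ξ * diver V ξ := by
    rw [diver, Finset.mul_sum]
  have h2 : ∑ i, c * (fderiv ℝ f ξ) (Pi.single i 1) * V ξ i
      = c * ∑ i, (fderiv ℝ f ξ) (Pi.single i 1) * V ξ i := by
    rw [Finset.mul_sum]; exact Finset.sum_congr rfl fun i _ => by ring
  rw [h1, h2] at h0
  set S := ∑ i, (fderiv ℝ f ξ) (Pi.single i 1) * V ξ i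
  set T := diver V ξ
  have key : φ ξ * (f ξ * T - r * S) = f ξ * (φ ξ * T + c * S) := by
    rw [hc]; field_simp; ring
  rw [h0, mul_zero] at key
  exact (mul_eq_zero.mp key).resolve_left hφpos.ne'


lemma charpoly_eval' {m : Type*} [Fintype m] [DecidableEq m] {R : Type*} [CommRing R]
    (M : Matrix m m R) (t : R) :
    M.charpoly.eval t = (Matrix.diagonal (fun _ => t) - M).det := by
  rw [Matrix.charpoly, ← Polynomial.coe_evalRingHom, RingHom.map_det]
  congr 1
  ext i j
  by_cases h : i = j <;>
    simp [Matrix.charmatrix_apply, Matrix.diagonal, h]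

-- endgame lemma
lemma endgame {n : ℕ} (A : Matrix (Fin n) (Fin n) ℝ) (w : Fin n → ℝ) (hw : w ≠ 0)
    (r : ℝ) (hr : 0 < r)
    (key : ∀ j, A.trace * w j = r * ∑ i, w i * A i j)
    (lam : Fin n → ℂ)
    (heig : (A.map (Complex.ofReal ·)).charpoly = ∏ i, (X - C (lam i))) :
    ∃ j, ∑ i, lam i = (r : ℂ) * lam j := by
  have hn : Nonempty (Fin n) := by
    rcases Nat.eq_zero_or_pos n with h | h
    · subst h; exact absurd (Subsingleton.elim w 0) hw
    · exact ⟨⟨0, h⟩⟩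
  set μ : ℝ := A.trace / r with hμ
  -- w is a null vector of (diag μ - Aᵀ)
  have hmv : (Matrix.diagonal (fun _ => μ) - A.transpose).mulVec w = 0 := by
    funext j
    have hk := key j
    simp only [Matrix.mulVec, dotProduct, Matrix.sub_apply, Matrix.diagonal_apply,
      Matrix.transpose_apply, Pi.zero_apply]
    rw [Finset.sum_congr rfl (fun k _ => sub_mul _ _ _), Finset.sum_sub_distrib]
    have h1 : ∑ k, (if j = k then μ else 0) * w k = μ * w j := by
      rw [Finset.sum_eq_single j] <;> simp +contextual [eq_comm]
    rw [h1]
    have : ∑ k, A k j * w k = ∑ k, w k * A k j := by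
      exact Finset.sum_congr rfl fun k _ => mul_comm _ _
    rw [this]
    field_simp [hμ]
    rw [sub_eq_zero, hμ, div_mul_eq_mul_div, div_eq_iff hr.ne']; linarith [hk, mul_comm r (∑ i, w i * A i j)]
  have hdet : (Matrix.diagonal (fun _ : Fin n => μ) - A.transpose).det = 0 :=
    (Matrix.exists_mulVec_eq_zero_iff).mp ⟨w, hw, hmv⟩
  have hdet2 : (Matrix.diagonal (fun _ : Fin n => μ) - A).det = 0 := by
    rw [← Matrix.det_transpose, Matrix.transpose_sub, Matrix.diagonal_transpose]
    exact hdet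
  -- μ is a root of the real charpoly
  have hev : A.charpoly.eval μ = 0 := by rw [charpoly_eval', hdet2]
  -- pass to ℂ
  have hevC : ((A.map (Complex.ofReal ·)).charpoly).eval (μ : ℂ) = 0 := by
    have : (A.map (Complex.ofReal ·)).charpoly = A.charpoly.map Complex.ofRealHom :=
      Matrix.charpoly_map A Complex.ofRealHom
    rw [this, Polynomial.eval_map, ← Complex.ofRealHom_eq_coe, Polynomial.eval₂_at_apply, hev, map_zero]
  rw [heig, Polynomial.eval_prod] at hevC
  obtain ⟨j, -, hj⟩ := Finset.prod_eq_zero_iff.mp hevC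
  simp only [Polynomial.eval_sub, Polynomial.eval_X, Polynomial.eval_C, sub_eq_zero] at hj
  -- sum of lam = trace
  have hsum : ∑ i, lam i = ((A.trace : ℝ) : ℂ) := by
    have h1 := Matrix.trace_eq_neg_charpoly_coeff (A.map (Complex.ofReal ·))
    rw [heig] at h1
    have h2 := Polynomial.prod_X_sub_C_coeff_card_pred Finset.univ lam
      (by simpa using Fintype.card_pos (α := Fin n))
    simp only [Finset.card_univ, Fintype.card_fin] at h2 h1
    have h3 : (A.map (Complex.ofReal ·)).trace = ((A.trace : ℝ) : ℂ) := by
      simp [Matrix.trace, Matrix.map_apply, Complex.ofReal_sum]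
    rw [h3, h2, neg_neg] at h1
    exact h1.symm
  refine ⟨j, ?_⟩
  rw [hsum, ← hj, hμ]
  have hrne : (r : ℂ) ≠ 0 := by exact_mod_cast hr.ne'
  push_cast
  field_simp


/-- If W = |f|^{-r} V is divergence-free off the regular hypersurface F = {f = 0},
ξ* ∈ F is a singular point of V, and λ₁,…,λₙ are the eigenvalues of DV(ξ*)
(i.e. the roots of its characteristic polynomial over ℂ), then
λ₁ + ⋯ + λₙ = r·λⱼ for at least one index j. -/
theorem stmt3 {n : ℕ} (V : (Fin n → ℝ) → (Fin n → ℝ)) (f : (Fin n → ℝ) → ℝ) (r : ℝ)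
    (hr : 0 < r)
    (hV : ContDiff ℝ (⊤ : ℕ∞) V) (hf : ContDiff ℝ (⊤ : ℕ∞) f)
    (hreg : ∀ ξ, f ξ = 0 → fderiv ℝ f ξ ≠ 0)
    (hdiv : ∀ ξ, f ξ ≠ 0 → diver (fun η => (|f η| ^ (-r)) • V η) ξ = 0)
    (ξstar : Fin n → ℝ) (hmem : f ξstar = 0) (hsing : V ξstar = 0)
    (lam : Fin n → ℂ)
    (heig : ((jacobian V ξstar).map (Complex.ofReal ·)).charpoly = ∏ i, (X - C (lam i))) :
    ∃ j, ∑ i, lam i = (r : ℂ) * lam j := by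
  classical
  set g : (Fin n → ℝ) → ℝ :=
    fun ξ => f ξ * diver V ξ - r * ∑ i, fderiv ℝ f ξ (Pi.single i 1) * V ξ i with hgdef
  have hoff : ∀ ξ, f ξ ≠ 0 → g ξ = 0 := by
    intro ξ hξ
    simp only [hgdef]
    exact offF V f r hr hV hf hdiv ξ hξ
  -- continuity of g
  have hfC : Continuous (fderiv ℝ f) := hf.continuous_fderiv (by simp)
  have hVC : Continuous (fderiv ℝ V) := hV.continuous_fderiv (by simp)
  have hgcont : Continuous g := by
    apply Continuous.sub
    · exact (hf.continuous).mul (continuous_finset_sum _ fun i _ =>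
        (continuous_apply i).comp (hVC.clm_apply continuous_const))
    · exact continuous_const.mul (continuous_finset_sum _ fun i _ =>
        (hfC.clm_apply continuous_const).mul ((continuous_apply i).comp hV.continuous))
  -- g vanishes wherever fderiv f ≠ 0
  have hg0 : ∀ ξ, fderiv ℝ f ξ ≠ 0 → g ξ = 0 := by
    intro ξ hξ
    rcases eq_or_ne (f ξ) 0 with hf0 | hf0
    · -- closure argument
      have hcl : ξ ∈ closure {η | f η ≠ 0} := by
        obtain ⟨v, hv⟩ : ∃ v, fderiv ℝ f ξ v ≠ 0 := by
          by_contra h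
          push_neg at h
          exact hξ (ContinuousLinearMap.ext h)
        have hline : HasDerivAt (fun t : ℝ => ξ + t • v) v 0 := by
          simpa using ((hasDerivAt_id (0:ℝ)).smul_const v).const_add ξ
        have hγ : HasDerivAt (fun t : ℝ => f (ξ + t • v)) (fderiv ℝ f ξ v) 0 := by
          have h := ((hf.differentiable (by simp) (ξ + (0:ℝ) • v)).hasFDerivAt).comp_hasDerivAt
            (x := (0:ℝ)) hline
          simpa [Function.comp_def] using h
        have hslope := hasDerivAt_iff_tendsto_slope.mp hγ
        have hev : ∀ᶠ t in nhdsWithin (0:ℝ) {(0:ℝ)}ᶜ,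
            slope (fun t : ℝ => f (ξ + t • v)) 0 t ≠ 0 := hslope.eventually_ne hv
        rw [mem_closure_iff_nhds]
        intro U hU
        have hcontline : ContinuousAt (fun t : ℝ => ξ + t • v) 0 := by fun_prop
        have hU' : ∀ᶠ t in nhds (0:ℝ), ξ + t • v ∈ U := by
          have : U ∈ nhds ((fun t : ℝ => ξ + t • v) 0) := by simpa using hU
          exact hcontline this
        obtain ⟨t, htU, hts, htne⟩ :=
          ((hU'.filter_mono nhdsWithin_le_nhds).and
            (hev.and (eventually_mem_nhdsWithin))).exists
        refine ⟨ξ + t • v, htU, ?_⟩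
        simp only [Set.mem_setOf_eq]
        intro hft
        apply hts
        rw [slope_def_field]
        simp [hft, hf0]
      have hsubset : {η | f η ≠ 0} ⊆ {η | g η = 0} := fun η hη => hoff η hη
      have := closure_minimal hsubset (isClosed_eq hgcont continuous_const) hcl
      exact this
    · exact hoff ξ hf0
  -- g vanishes near ξstar
  have hN : {ξ | fderiv ℝ f ξ ≠ 0} ∈ nhds ξstar :=
    (isOpen_compl_singleton.preimage hfC).mem_nhds (hreg ξstar hmem)
  have hgev : g =ᶠ[nhds ξstar] (fun _ => 0) := Filter.eventually_of_mem hN hg0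
  have hfderiv0 : fderiv ℝ g ξstar = 0 := by
    rw [hgev.fderiv_eq]
    simp
  -- differentiate g at ξstar
  have hfd : HasFDerivAt f (fderiv ℝ f ξstar) ξstar := (hf.differentiable (by simp) ξstar).hasFDerivAt
  have hVd : HasFDerivAt V (fderiv ℝ V ξstar) ξstar := (hV.differentiable (by simp) ξstar).hasFDerivAt
  have hdVC : ContDiff ℝ (⊤ : ℕ∞) (fderiv ℝ V) := hV.fderiv_right (by simp)
  have hdfC : ContDiff ℝ (⊤ : ℕ∞) (fderiv ℝ f) := hf.fderiv_right (by simp)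
  have hdV_diff : DifferentiableAt ℝ (diver V) ξstar := by
    apply DifferentiableAt.fun_sum
    intro i _
    have h1 : DifferentiableAt ℝ (fun ξ => (fderiv ℝ V ξ) (Pi.single i 1)) ξstar :=
      ((hdVC.differentiable (by simp)) ξstar).clm_apply (differentiableAt_const _)
    exact differentiableAt_pi.mp h1 i
  have hp_diff : ∀ i : Fin n,
      DifferentiableAt ℝ (fun ξ => (fderiv ℝ f ξ) (Pi.single i 1)) ξstar := fun i =>
    ((hdfC.differentiable (by simp)) ξstar).clm_apply (differentiableAt_const _)
  have hVi : ∀ i : Fin n, HasFDerivAt (fun η => V η i)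
      ((ContinuousLinearMap.proj i).comp (fderiv ℝ V ξstar)) ξstar := fun i =>
    (ContinuousLinearMap.proj (R := ℝ) (φ := fun _ : Fin n => ℝ) i).hasFDerivAt.comp ξstar hVd
  have hg1 : HasFDerivAt (fun ξ => f ξ * diver V ξ)
      (f ξstar • fderiv ℝ (diver V) ξstar + diver V ξstar • fderiv ℝ f ξstar) ξstar :=
    hfd.mul hdV_diff.hasFDerivAt
  have hg2 : ∀ i ∈ Finset.univ, HasFDerivAt
      (fun ξ => (fderiv ℝ f ξ) (Pi.single i 1) * V ξ i)
      (((fderiv ℝ f ξstar) (Pi.single i 1)) •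
          ((ContinuousLinearMap.proj i).comp (fderiv ℝ V ξstar)) +
        V ξstar i • fderiv ℝ (fun ξ => (fderiv ℝ f ξ) (Pi.single i 1)) ξstar) ξstar :=
    fun i _ => ((hp_diff i).hasFDerivAt).mul (hVi i)
  have hg2sum := HasFDerivAt.fun_sum hg2
  have hg : HasFDerivAt g
      ((f ξstar • fderiv ℝ (diver V) ξstar + diver V ξstar • fderiv ℝ f ξstar) -
        r • (∑ i, (((fderiv ℝ f ξstar) (Pi.single i 1)) •
          ((ContinuousLinearMap.proj i).comp (fderiv ℝ V ξstar)) +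
          V ξstar i • fderiv ℝ (fun ξ => (fderiv ℝ f ξ) (Pi.single i 1)) ξstar))) ξstar :=
    hg1.sub (hg2sum.const_mul r)
  have hD := hg.fderiv.symm.trans hfderiv0
  -- key identity
  have key : ∀ j, (Matrix.trace (jacobian V ξstar)) * (fderiv ℝ f ξstar) (Pi.single j 1)
      = r * ∑ i, (fderiv ℝ f ξstar) (Pi.single i 1) * (jacobian V ξstar) i j := by
    have hjac : ∀ i j, jacobian V ξstar i j = (fderiv ℝ V ξstar) (Pi.single j 1) i := by
      intro i j
      show fderiv ℝ (fun η => V η i) ξstar (Pi.single j 1) = _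
      rw [(hVi i).fderiv]
      rfl
    have htr : Matrix.trace (jacobian V ξstar) = diver V ξstar := by
      simp only [Matrix.trace, Matrix.diag, diver]
      exact Finset.sum_congr rfl fun i _ => hjac i i
    intro j
    have h := DFunLike.congr_fun hD (Pi.single j 1)
    have hV0 : ∀ i, V ξstar i = 0 := fun i => congrFun hsing i
    simp only [ContinuousLinearMap.sub_apply, ContinuousLinearMap.add_apply,
      ContinuousLinearMap.coe_smul', Pi.smul_apply, smul_eq_mul, hmem, hV0, zero_mul, zero_add,
      add_zero, ContinuousLinearMap.coe_sum', Finset.sum_apply, ContinuousLinearMap.coe_comp',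
      Function.comp_apply, ContinuousLinearMap.proj_apply, ContinuousLinearMap.zero_apply] at h
    rw [htr]
    rw [sub_eq_zero] at h
    simp only [hjac]
    exact h
  -- nonvanishing of the gradient coordinates
  have hw : (fun j => (fderiv ℝ f ξstar) (Pi.single j 1)) ≠ 0 := by
    intro h0
    apply hreg ξstar hmem
    ext x
    have hx : x = ∑ i, x i • (Pi.single i 1 : Fin n → ℝ) := by
      funext j
      rw [Finset.sum_apply]
      simp [Pi.single_apply]
    have hcf : ∀ j, (fderiv ℝ f ξstar) (Pi.single j (1:ℝ)) = 0 := fun j => congrFun h0 j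
    conv_lhs => rw [hx]
    rw [map_sum]
    simp [hcf]
  exact endgame (jacobian V ξstar) _ hw r hr key lam heig
end

section
/- Let W = (1/(2F^{3/2}))·V where F(x,y,p) = a + 2bp + cp² and V = 2Δ(∂_x + p∂_y) + M∂_p is the projectivized geodesic field of the metric ds² = a dx² + 2b dxdy + c dy². Then div W = 0 at all points where F ≠ 0. Verify this for the concrete metric ds² = dx² - y dy²: with a=1,b=0,c=-y, F = 1 - yp², Δ = -y, M = p², V = (-2y, -2yp, p²), W = V/(2(1-yp²)^{3/2}), and ∂_x W₁ + ∂_y W₂ + ∂_p W₃ = 0 wherever 1 - yp² > 0. -/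
/-- Partial derivative in the first variable. -/
noncomputable def pdx (f : ℝ → ℝ → ℝ) (x y : ℝ) : ℝ := deriv (fun u => f u y) x
/-- Partial derivative in the second variable. -/
noncomputable def pdy (f : ℝ → ℝ → ℝ) (x y : ℝ) : ℝ := deriv (fun v => f x v) y

noncomputable def mu0 (a b c : ℝ → ℝ → ℝ) (x y : ℝ) : ℝ :=
  a x y * (pdy a x y - 2 * pdx b x y) + pdx a x y * b x y
noncomputable def mu1 (a b c : ℝ → ℝ → ℝ) (x y : ℝ) : ℝ :=
  b x y * (3 * pdy a x y - 2 * pdx b x y) + pdx a x y * c x y - 2 * a x y * pdx c x y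
noncomputable def mu2 (a b c : ℝ → ℝ → ℝ) (x y : ℝ) : ℝ :=
  b x y * (2 * pdy b x y - 3 * pdx c x y) + 2 * pdy a x y * c x y - a x y * pdy c x y
noncomputable def mu3 (a b c : ℝ → ℝ → ℝ) (x y : ℝ) : ℝ :=
  c x y * (2 * pdy b x y - pdx c x y) - b x y * pdy c x y

/-- The cubic M(x,y,p). -/
noncomputable def Mcubic (a b c : ℝ → ℝ → ℝ) (x y p : ℝ) : ℝ :=
  mu0 a b c x y + mu1 a b c x y * p + mu2 a b c x y * p ^ 2 + mu3 a b c x y * p ^ 3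

/-- F(x,y,p) = a + 2bp + cp². -/
noncomputable def Ffun (a b c : ℝ → ℝ → ℝ) (x y p : ℝ) : ℝ :=
  a x y + 2 * b x y * p + c x y * p ^ 2

/-- The field W = V/(2F^{3/2}), V = (2Δ, 2Δp, M), Δ = ac - b². -/
noncomputable def Wfield (a b c : ℝ → ℝ → ℝ) (x y p : ℝ) : ℝ × ℝ × ℝ :=
  (1 / (2 * Ffun a b c x y p ^ ((3 : ℝ) / 2))) •
    (2 * (a x y * c x y - b x y ^ 2),
     2 * (a x y * c x y - b x y ^ 2) * p,
     Mcubic a b c x y p)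

/-- Divergence of W in the coordinates (x,y,p). -/
noncomputable def divW (a b c : ℝ → ℝ → ℝ) (x y p : ℝ) : ℝ :=
  deriv (fun u => (Wfield a b c u y p).1) x
    + deriv (fun v => (Wfield a b c x v p).2.1) y
    + deriv (fun q => (Wfield a b c x y q).2.2) p

open Real

lemma rpow32_neg {t : ℝ} (ht : t < 0) : t ^ ((3:ℝ)/2) = 0 := by
  rw [Real.rpow_def_of_neg ht]
  have h : (3:ℝ)/2 * π = π + π/2 := by ring
  rw [h, Real.cos_add, Real.cos_pi_div_two, Real.sin_pi_div_two, Real.cos_pi, Real.sin_pi]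
  ring

lemma hasDerivAt_fst' (a : ℝ → ℝ → ℝ) (ha : ContDiff ℝ (⊤ : ℕ∞) fun q : ℝ × ℝ => a q.1 q.2) (x y : ℝ) :
    HasDerivAt (fun u => a u y) (pdx a x y) x := by
  have hd : DifferentiableAt ℝ (fun u => a u y) x := by
    have h : (fun u => a u y) = (fun q : ℝ × ℝ => a q.1 q.2) ∘ fun u => (u, y) := rfl
    rw [h]
    exact ((ha.differentiable (by simp)) _).comp x
      (differentiableAt_id.prodMk (differentiableAt_const y))
  exact hd.hasDerivAt

lemma hasDerivAt_snd' (a : ℝ → ℝ → ℝ) (ha : ContDiff ℝ (⊤ : ℕ∞) fun q : ℝ × ℝ => a q.1 q.2) (x y : ℝ) :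
    HasDerivAt (fun v => a x v) (pdy a x y) y := by
  have hd : DifferentiableAt ℝ (fun v => a x v) y := by
    have h : (fun v => a x v) = (fun q : ℝ × ℝ => a q.1 q.2) ∘ fun v => (x, v) := rfl
    rw [h]
    exact ((ha.differentiable (by simp)) _).comp y
      ((differentiableAt_const x).prodMk differentiableAt_id)
  exact hd.hasDerivAt

lemma divW_eq_zero (a b c : ℝ → ℝ → ℝ)
    (ha : ContDiff ℝ (⊤ : ℕ∞) fun q : ℝ × ℝ => a q.1 q.2)
    (hb : ContDiff ℝ (⊤ : ℕ∞) fun q : ℝ × ℝ => b q.1 q.2)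
    (hc : ContDiff ℝ (⊤ : ℕ∞) fun q : ℝ × ℝ => c q.1 q.2)
    (x y p : ℝ) (hF : Ffun a b c x y p ≠ 0) : divW a b c x y p = 0 := by
  rcases hF.lt_or_gt with hneg | hpos
  · -- F < 0 : W vanishes in a neighbourhood
    have cont2 : ∀ (f : ℝ → ℝ → ℝ), ContDiff ℝ (⊤ : ℕ∞) (fun q : ℝ × ℝ => f q.1 q.2) →
        ∀ (g h : ℝ → ℝ), Continuous g → Continuous h →
        Continuous (fun t => f (g t) (h t)) := by
      intro f hf g h hg hh
      exact hf.continuous.comp (hg.prodMk hh)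
    have hFx : Continuous fun u => Ffun a b c u y p := by
      simp only [Ffun]
      exact ((cont2 a ha _ _ continuous_id continuous_const).add
        (((continuous_const.mul (cont2 b hb _ _ continuous_id continuous_const)).mul
          continuous_const))).add
        ((cont2 c hc _ _ continuous_id continuous_const).mul continuous_const)
    have hFy : Continuous fun v => Ffun a b c x v p := by
      simp only [Ffun]
      exact ((cont2 a ha _ _ continuous_const continuous_id).add
        (((continuous_const.mul (cont2 b hb _ _ continuous_const continuous_id)).mul
          continuous_const))).add
        ((cont2 c hc _ _ continuous_const continuous_id).mul continuous_const)
    have hFp : Continuous fun q => Ffun a b c x y q := by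
      simp only [Ffun]
      exact (continuous_const.add (continuous_const.mul continuous_id)).add
        (continuous_const.mul (continuous_pow 2))
    have key : ∀ (F0 : ℝ → ℝ) (G : ℝ → ℝ) (t : ℝ), Continuous F0 → F0 t < 0 →
        deriv (fun u => 1 / (2 * F0 u ^ ((3:ℝ)/2)) * G u) t = 0 := by
      intro F0 G t hcont hlt
      have hev : (fun u => 1 / (2 * F0 u ^ ((3:ℝ)/2)) * G u) =ᶠ[nhds t] fun _ => 0 := by
        have : ∀ᶠ u in nhds t, F0 u < 0 :=
          hcont.continuousAt.eventually_lt continuousAt_const hlt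
        filter_upwards [this] with u hu
        rw [rpow32_neg hu]
        simp
      rw [hev.deriv_eq, deriv_const]
    have e1 : deriv (fun u => (Wfield a b c u y p).1) x = 0 :=
      key _ (fun u => 2 * (a u y * c u y - b u y ^ 2)) x hFx hneg
    have e2 : deriv (fun v => (Wfield a b c x v p).2.1) y = 0 :=
      key _ (fun v => 2 * (a x v * c x v - b x v ^ 2) * p) y hFy hneg
    have e3 : deriv (fun q => (Wfield a b c x y q).2.2) p = 0 :=
      key _ (fun q => Mcubic a b c x y q) p hFp hneg
    simp [divW, e1, e2, e3]
  · -- F > 0 : the real computation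
    set s : ℝ := Ffun a b c x y p ^ ((1:ℝ)/2) with hs_def
    have hs0 : 0 < s := Real.rpow_pos_of_pos hpos _
    have hsne : s ≠ 0 := hs0.ne'
    have h32 : Ffun a b c x y p ^ ((3:ℝ)/2) = s ^ 3 := by
      rw [hs_def, ← Real.rpow_natCast (Ffun a b c x y p ^ ((1:ℝ)/2)) 3,
        ← Real.rpow_mul hpos.le]
      norm_num
    have h12 : Ffun a b c x y p ^ ((3:ℝ)/2 - 1) = s := by norm_num [hs_def]
    have hF2 : s ^ 2 = Ffun a b c x y p := by
      rw [hs_def, ← Real.rpow_natCast (Ffun a b c x y p ^ ((1:ℝ)/2)) 2,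
        ← Real.rpow_mul hpos.le]
      norm_num
    have hFne : Ffun a b c x y p ≠ 0 := hpos.ne'
    have h2ne : 2 * Ffun a b c x y p ^ ((3:ℝ)/2) ≠ 0 := by rw [h32]; positivity
    have hax := hasDerivAt_fst' a ha x y
    have hbx := hasDerivAt_fst' b hb x y
    have hcx := hasDerivAt_fst' c hc x y
    have hay := hasDerivAt_snd' a ha x y
    have hby := hasDerivAt_snd' b hb x y
    have hcy := hasDerivAt_snd' c hc x y
    -- x-direction
    have hFu : HasDerivAt (fun u => Ffun a b c u y p)
        (pdx a x y + 2 * pdx b x y * p + pdx c x y * p ^ 2) x := by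
      simp only [Ffun]
      exact (hax.add ((hbx.const_mul 2).mul_const p)).add (hcx.mul_const (p ^ 2))
    have e1 : deriv (fun u => (Wfield a b c u y p).1) x =
        (pdx a x y * c x y + a x y * pdx c x y - 2 * b x y * pdx b x y) / s ^ 3
          - 3 * (a x y * c x y - b x y ^ 2)
              * (pdx a x y + 2 * pdx b x y * p + pdx c x y * p ^ 2) / (2 * s ^ 5) := by
      have w1eq : (fun u => (Wfield a b c u y p).1)
          = fun u => 1 / (2 * Ffun a b c u y p ^ ((3:ℝ)/2))
              * (2 * (a u y * c u y - b u y ^ 2)) := rfl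
      rw [w1eq]
      have H : HasDerivAt (fun u => 1 / (2 * Ffun a b c u y p ^ ((3:ℝ)/2))
          * (2 * (a u y * c u y - b u y ^ 2))) _ x := ((hasDerivAt_const x (1:ℝ)).div
          ((hFu.rpow_const (Or.inl hFne)).const_mul 2) h2ne).mul
          (((hax.mul hcx).sub (hbx.pow 2)).const_mul 2)
      rw [H.deriv]
      simp only [Pi.div_apply]
      rw [h32, h12]
      field_simp
      ring
    -- y-direction
    have hFv : HasDerivAt (fun v => Ffun a b c x v p)
        (pdy a x y + 2 * pdy b x y * p + pdy c x y * p ^ 2) y := by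
      simp only [Ffun]
      exact (hay.add ((hby.const_mul 2).mul_const p)).add (hcy.mul_const (p ^ 2))
    have e2 : deriv (fun v => (Wfield a b c x v p).2.1) y =
        (pdy a x y * c x y + a x y * pdy c x y - 2 * b x y * pdy b x y) * p / s ^ 3
          - 3 * (a x y * c x y - b x y ^ 2) * p
              * (pdy a x y + 2 * pdy b x y * p + pdy c x y * p ^ 2) / (2 * s ^ 5) := by
      have w2eq : (fun v => (Wfield a b c x v p).2.1)
          = fun v => 1 / (2 * Ffun a b c x v p ^ ((3:ℝ)/2))
              * (2 * (a x v * c x v - b x v ^ 2) * p) := rfl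
      rw [w2eq]
      have H : HasDerivAt (fun v => 1 / (2 * Ffun a b c x v p ^ ((3:ℝ)/2))
          * (2 * (a x v * c x v - b x v ^ 2) * p)) _ y := ((hasDerivAt_const y (1:ℝ)).div
          ((hFv.rpow_const (Or.inl hFne)).const_mul 2) h2ne).mul
          ((((hay.mul hcy).sub (hby.pow 2)).const_mul 2).mul_const p)
      rw [H.deriv]
      simp only [Pi.div_apply]
      rw [h32, h12]
      field_simp
      ring
    -- p-direction
    have hFq : HasDerivAt (fun q => Ffun a b c x y q)
        (2 * b x y + 2 * c x y * p) p := by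
      simp only [Ffun]
      have H : HasDerivAt (fun q => a x y + 2 * b x y * q + c x y * q ^ 2) _ p :=
          ((hasDerivAt_const p (a x y)).add
          ((hasDerivAt_id p).const_mul (2 * b x y))).add
          ((hasDerivAt_pow 2 p).const_mul (c x y))
      convert H using 1
      push_cast
      ring
    have hMq : HasDerivAt (fun q => Mcubic a b c x y q)
        (mu1 a b c x y + 2 * mu2 a b c x y * p + 3 * mu3 a b c x y * p ^ 2) p := by
      simp only [Mcubic]
      have H : HasDerivAt (fun q => mu0 a b c x y + mu1 a b c x y * q + mu2 a b c x y * q ^ 2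
          + mu3 a b c x y * q ^ 3) _ p := (((hasDerivAt_const p (mu0 a b c x y)).add
          ((hasDerivAt_id p).const_mul (mu1 a b c x y))).add
          ((hasDerivAt_pow 2 p).const_mul (mu2 a b c x y))).add
          ((hasDerivAt_pow 3 p).const_mul (mu3 a b c x y))
      convert H using 1
      push_cast
      ring
    have e3 : deriv (fun q => (Wfield a b c x y q).2.2) p =
        (mu1 a b c x y + 2 * mu2 a b c x y * p + 3 * mu3 a b c x y * p ^ 2) / (2 * s ^ 3)
          - 3 * Mcubic a b c x y p * (2 * b x y + 2 * c x y * p) / (4 * s ^ 5) := by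
      have w3eq : (fun q => (Wfield a b c x y q).2.2)
          = fun q => 1 / (2 * Ffun a b c x y q ^ ((3:ℝ)/2))
              * Mcubic a b c x y q := rfl
      rw [w3eq]
      have H : HasDerivAt (fun q => 1 / (2 * Ffun a b c x y q ^ ((3:ℝ)/2))
          * Mcubic a b c x y q) _ p := ((hasDerivAt_const p (1:ℝ)).div
          ((hFq.rpow_const (Or.inl hFne)).const_mul 2) h2ne).mul hMq
      rw [H.deriv]
      simp only [Pi.div_apply]
      rw [h32, h12]
      field_simp
      ring
    have hA : a x y = s ^ 2 - 2 * b x y * p - c x y * p ^ 2 := by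
      rw [hF2]; simp only [Ffun]; ring
    rw [divW, e1, e2, e3]
    simp only [Mcubic, mu0, mu1, mu2, mu3]
    rw [hA]
    field_simp
    ring

/-- The field W = V/(2F^{3/2}) of the length functional is divergence-free wherever
F ≠ 0; in particular for ds² = dx² - y dy² (a = 1, b = 0, c = -y, F = 1 - yp²,
W = (-2y, -2yp, p²)/(2(1-yp²)^{3/2})) the divergence vanishes wherever 1 - yp² > 0. -/
theorem stmt19 :
    (∀ a b c : ℝ → ℝ → ℝ,
      ContDiff ℝ (⊤ : ℕ∞) (fun q : ℝ × ℝ => a q.1 q.2) →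
      ContDiff ℝ (⊤ : ℕ∞) (fun q : ℝ × ℝ => b q.1 q.2) →
      ContDiff ℝ (⊤ : ℕ∞) (fun q : ℝ × ℝ => c q.1 q.2) →
      ∀ x y p : ℝ, Ffun a b c x y p ≠ 0 → divW a b c x y p = 0) ∧
    (∀ x y p : ℝ, 1 - y * p ^ 2 > 0 →
      (Wfield (fun _ _ => 1) (fun _ _ => 0) (fun _ v => -v) x y p
          = (1 / (2 * (1 - y * p ^ 2) ^ ((3 : ℝ) / 2))) • (-(2 * y), -(2 * y) * p, p ^ 2)) ∧
      divW (fun _ _ => 1) (fun _ _ => 0) (fun _ v => -v) x y p = 0) := by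
  constructor
  · exact divW_eq_zero
  · intro x y p hyp
    have ha : ContDiff ℝ (⊤ : ℕ∞) (fun q : ℝ × ℝ => ((fun _ _ => 1 : ℝ → ℝ → ℝ)) q.1 q.2) :=
      contDiff_const
    have hb : ContDiff ℝ (⊤ : ℕ∞) (fun q : ℝ × ℝ => ((fun _ _ => 0 : ℝ → ℝ → ℝ)) q.1 q.2) :=
      contDiff_const
    have hc : ContDiff ℝ (⊤ : ℕ∞) (fun q : ℝ × ℝ => ((fun _ v => -v : ℝ → ℝ → ℝ)) q.1 q.2) :=
      contDiff_snd.neg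
    have hFeq : Ffun (fun _ _ => 1) (fun _ _ => 0) (fun _ v => -v) x y p = 1 - y * p ^ 2 := by
      simp [Ffun]; ring
    constructor
    · have hpd : pdy (fun _ v => -v) x y = -1 := by
        simp [pdy]
      have hM : Mcubic (fun _ _ => 1) (fun _ _ => 0) (fun _ v => -v) x y p = p ^ 2 := by
        simp [Mcubic, mu0, mu1, mu2, mu3, pdx, pdy]
      rw [Wfield, hFeq, hM]
      norm_num
    · exact divW_eq_zero _ _ _ ha hb hc x y p (by rw [hFeq]; linarith)
end
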